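/- Let G be a connected graph on vertex set {1,...,n} with n ≥ 2 and Φ = (F_1,...,F_n). If γ(F_i) = 1 for all i ∈ [n], then γ(G) = γ(G[Φ]). -/

import Mathlib

open scoped Classical

/-- A dominating set: every vertex is in `D` or adjacent to a vertex of `D`. -/
def isDominatingSet {V : Type*} (H : SimpleGraph V) (D : Finset V) : Prop :=
  ∀ v : V, v ∈ D ∨ ∃ u ∈ D, H.Adj u v

/-- A total dominating set: every vertex has a neighbor in `D`. -/
def isTotalDominatingSet {V : Type*} (H : SimpleGraph V) (D : Finset V) : Prop :=
  ∀ v : V, ∃ u ∈ D, H.Adj u v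

def isMinimalDominatingSet {V : Type*} (H : SimpleGraph V) (D : Finset V) : Prop :=
  isDominatingSet H D ∧ ∀ D' : Finset V, D' ⊂ D → ¬ isDominatingSet H D'

def isMinimalTotalDominatingSet {V : Type*} (H : SimpleGraph V) (D : Finset V) : Prop :=
  isTotalDominatingSet H D ∧ ∀ D' : Finset V, D' ⊂ D → ¬ isTotalDominatingSet H D'

noncomputable def domNum {V : Type*} (H : SimpleGraph V) : ℕ :=
  sInf {k | ∃ D : Finset V, isDominatingSet H D ∧ D.card = k}

noncomputable def totalDomNum {V : Type*} (H : SimpleGraph V) : ℕ :=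
  sInf {k | ∃ D : Finset V, isTotalDominatingSet H D ∧ D.card = k}

noncomputable def upperDomNum {V : Type*} (H : SimpleGraph V) : ℕ :=
  sSup {k | ∃ D : Finset V, isMinimalDominatingSet H D ∧ D.card = k}

noncomputable def upperTotalDomNum {V : Type*} (H : SimpleGraph V) : ℕ :=
  sSup {k | ∃ D : Finset V, isMinimalTotalDominatingSet H D ∧ D.card = k}

/-- Well (γ-)dominated: all minimal dominating sets have the same size. -/
def WellDominated {V : Type*} (H : SimpleGraph V) : Prop :=
  ∀ D₁ D₂ : Finset V, isMinimalDominatingSet H D₁ → isMinimalDominatingSet H D₂ →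
    D₁.card = D₂.card

/-- Well γ_t-dominated: all minimal total dominating sets have the same size. -/
def WellTotalDominated {V : Type*} (H : SimpleGraph V) : Prop :=
  ∀ D₁ D₂ : Finset V, isMinimalTotalDominatingSet H D₁ → isMinimalTotalDominatingSet H D₂ →
    D₁.card = D₂.card

/-- Restrained dominating set: dominating and every vertex outside `D` has a
neighbor outside `D`. -/
def isRestrainedDominatingSet {V : Type*} (H : SimpleGraph V) (D : Finset V) : Prop :=
  isDominatingSet H D ∧ ∀ v ∉ D, ∃ u ∉ D, H.Adj u v

/-- Outer-connected dominating set: dominating and the subgraph induced by the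
complement of `D` is connected. -/
def isOuterConnectedDominatingSet {V : Type*} (H : SimpleGraph V) (D : Finset V) : Prop :=
  isDominatingSet H D ∧ (H.induce ((↑D : Set V)ᶜ)).Connected

def isTotalRestrainedDominatingSet {V : Type*} (H : SimpleGraph V) (D : Finset V) : Prop :=
  isTotalDominatingSet H D ∧ ∀ v ∉ D, ∃ u ∉ D, H.Adj u v

def isTotalOuterConnectedDominatingSet {V : Type*} (H : SimpleGraph V) (D : Finset V) : Prop :=
  isTotalDominatingSet H D ∧ (H.induce ((↑D : Set V)ᶜ)).Connected

noncomputable def restrainedDomNum {V : Type*} (H : SimpleGraph V) : ℕ :=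
  sInf {k | ∃ D : Finset V, isRestrainedDominatingSet H D ∧ D.card = k}

noncomputable def ocDomNum {V : Type*} (H : SimpleGraph V) : ℕ :=
  sInf {k | ∃ D : Finset V, isOuterConnectedDominatingSet H D ∧ D.card = k}

noncomputable def totalRestrainedDomNum {V : Type*} (H : SimpleGraph V) : ℕ :=
  sInf {k | ∃ D : Finset V, isTotalRestrainedDominatingSet H D ∧ D.card = k}

noncomputable def totalOcDomNum {V : Type*} (H : SimpleGraph V) : ℕ :=
  sInf {k | ∃ D : Finset V, isTotalOuterConnectedDominatingSet H D ∧ D.card = k}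

/-- Paired dominating set: dominating and the induced subgraph on `D` has a
perfect matching. -/
def isPairedDominatingSet {V : Type*} (H : SimpleGraph V) (D : Finset V) : Prop :=
  isDominatingSet H D ∧
    ∃ M : SimpleGraph.Subgraph (H.induce (↑D : Set V)), M.IsPerfectMatching

noncomputable def pairedDomNum {V : Type*} (H : SimpleGraph V) : ℕ :=
  sInf {k | ∃ D : Finset V, isPairedDominatingSet H D ∧ D.card = k}

def isIndependentSet {V : Type*} (H : SimpleGraph V) (D : Finset V) : Prop :=
  ∀ u ∈ D, ∀ v ∈ D, ¬ H.Adj u v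

def isMaximalIndependentSet {V : Type*} (H : SimpleGraph V) (D : Finset V) : Prop :=
  isIndependentSet H D ∧ ∀ D' : Finset V, D ⊂ D' → ¬ isIndependentSet H D'

/-- The independent domination number `i(H)`. -/
noncomputable def indepDomNum {V : Type*} (H : SimpleGraph V) : ℕ :=
  sInf {k | ∃ D : Finset V, isMaximalIndependentSet H D ∧ D.card = k}

/-- The independence number `β₀(H)`. -/
noncomputable def indepNum {V : Type*} (H : SimpleGraph V) : ℕ :=
  sSup {k | ∃ D : Finset V, isIndependentSet H D ∧ D.card = k}

/-- An efficient dominating set: every vertex is dominated by exactly one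
member of `D`. -/
def isEfficientDominatingSet {V : Type*} (H : SimpleGraph V) (D : Finset V) : Prop :=
  ∀ v : V, ∃! u : V, u ∈ D ∧ (u = v ∨ H.Adj u v)

/-- The generalized lexicographic product `G[Φ]` of a graph `G` on `Fin n` and a
family `Φ = (F 0, …, F (n-1))` of pairwise disjoint graphs: the `F i` are induced
subgraphs, and vertices in distinct `F i`, `F j` are adjacent iff `i j ∈ E(G)`. -/
def GLP {n : ℕ} (G : SimpleGraph (Fin n)) {V : Fin n → Type*}
    (F : ∀ i, SimpleGraph (V i)) : SimpleGraph (Σ i, V i) where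
  Adj x y := (x.1 ≠ y.1 ∧ G.Adj x.1 y.1) ∨ ∃ h : x.1 = y.1, (F y.1).Adj (h ▸ x.2) y.2
  symm := ⟨by
    rintro ⟨i, a⟩ ⟨j, b⟩ (⟨hne, hadj⟩ | ⟨h, hadj⟩)
    · exact Or.inl ⟨fun hh => hne hh.symm, hadj.symm⟩
    · dsimp only at h
      subst h
      exact Or.inr ⟨rfl, hadj.symm⟩⟩
  loopless := ⟨by
    rintro ⟨i, a⟩ (⟨hne, _⟩ | ⟨h, hadj⟩)
    · exact hne rfl
    · exact (F i).loopless.irrefl a hadj⟩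

/-- The number of vertices of `D ∩ V(F i)`. -/
noncomputable def layerCount {n : ℕ} {V : Fin n → Type*} [∀ i, Fintype (V i)]
    (D : Finset (Σ i, V i)) (i : Fin n) : ℕ :=
  (D.filter (fun x => x.1 = i)).card

/-!
A dominating set of `G` lifts to one of `G[Φ]` of no larger size by replacing each vertex `i`
with a dominating vertex of `F i`; conversely, a dominating set of `G[Φ]` projects onto one
of `G`, since a vertex of the layer `F i` is dominated either from inside that layer or from a
layer `F j` with `ij ∈ E(G)`.
-/

lemma domNum_le_card {V : Type*} (H : SimpleGraph V) (D : Finset V) (hD : isDominatingSet H D) :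
    domNum H ≤ D.card :=
  Nat.sInf_le ⟨D, hD, rfl⟩

lemma exists_card_eq_domNum {V : Type*} (H : SimpleGraph V) (D : Finset V)
    (hD : isDominatingSet H D) : ∃ D' : Finset V, isDominatingSet H D' ∧ D'.card = domNum H :=
  Nat.sInf_mem (s := {k | ∃ D : Finset V, isDominatingSet H D ∧ D.card = k})
    ⟨D.card, D, hD, rfl⟩

lemma exists_singleton_isDominatingSet_of_domNum_eq_one {V : Type*} (H : SimpleGraph V)
    (h : domNum H = 1) : ∃ w : V, isDominatingSet H {w} := by
  have hne : {k | ∃ D : Finset V, isDominatingSet H D ∧ D.card = k}.Nonempty := by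
    by_contra hempty
    rw [Set.not_nonempty_iff_eq_empty] at hempty
    simp [domNum, hempty] at h
  obtain ⟨D, hD, hcard⟩ : ∃ D : Finset V, isDominatingSet H D ∧ D.card = 1 :=
    h ▸ Nat.sInf_mem hne
  obtain ⟨w, rfl⟩ := Finset.card_eq_one.mp hcard
  exact ⟨w, hD⟩

section GLP

variable {n : ℕ} {G : SimpleGraph (Fin n)} {V : Fin n → Type*} {F : ∀ i, SimpleGraph (V i)}

lemma isDominatingSet.image_sigma_mk {S : Finset (Fin n)} (hS : isDominatingSet G S)
    (w : ∀ i, V i) (hw : ∀ i, isDominatingSet (F i) {w i}) :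
    isDominatingSet (GLP G F) (S.image fun i => ⟨i, w i⟩) := by
  rintro ⟨j, v⟩
  rcases hS j with hj | ⟨i, hi, hij⟩
  · have hwj : (⟨j, w j⟩ : Σ i, V i) ∈ S.image fun i => ⟨i, w i⟩ :=
      Finset.mem_image_of_mem _ hj
    rcases hw j v with hv | ⟨u, hu, huv⟩
    · rw [Finset.mem_singleton] at hv
      exact Or.inl (hv ▸ hwj)
    · rw [Finset.mem_singleton] at hu
      subst hu
      exact Or.inr ⟨_, hwj, Or.inr ⟨rfl, huv⟩⟩
  · exact Or.inr
      ⟨⟨i, w i⟩, Finset.mem_image_of_mem _ hi, Or.inl ⟨G.ne_of_adj hij, hij⟩⟩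

lemma isDominatingSet.image_fst [∀ i, Nonempty (V i)] {D : Finset (Σ i, V i)}
    (hD : isDominatingSet (GLP G F) D) : isDominatingSet G (D.image Sigma.fst) := by
  intro i
  rcases hD ⟨i, Classical.arbitrary (V i)⟩ with hi | ⟨⟨j, u⟩, hu, hadj⟩
  · exact Or.inl (Finset.mem_image_of_mem _ hi)
  · rcases hadj with ⟨-, hji⟩ | ⟨hji, -⟩
    · exact Or.inr ⟨j, Finset.mem_image_of_mem _ hu, hji⟩
    · exact Or.inl (Finset.mem_image.mpr ⟨_, hu, hji⟩)

end GLP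

theorem stmt_3_general {n : ℕ} (G : SimpleGraph (Fin n))
    (V : Fin n → Type) (F : ∀ i, SimpleGraph (V i))
    (hF : ∀ i, domNum (F i) = 1) :
    domNum G = domNum (GLP G F) := by
  choose w hw using fun i => exists_singleton_isDominatingSet_of_domNum_eq_one (F i) (hF i)
  have : ∀ i, Nonempty (V i) := fun i => ⟨w i⟩
  obtain ⟨S, hS, hScard⟩ :=
    exists_card_eq_domNum G Finset.univ fun i => Or.inl (Finset.mem_univ i)
  have hlift := hS.image_sigma_mk w hw
  obtain ⟨D, hD, hDcard⟩ := exists_card_eq_domNum _ _ hlift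
  apply le_antisymm
  · calc domNum G ≤ (D.image Sigma.fst).card := domNum_le_card G _ hD.image_fst
      _ ≤ D.card := Finset.card_image_le
      _ = domNum (GLP G F) := hDcard
  · calc domNum (GLP G F) ≤ _ := domNum_le_card _ _ hlift
      _ ≤ S.card := Finset.card_image_le
      _ = domNum G := hScard

/-- If `γ(F i) = 1` for all `i`, then `γ(G) = γ(G[Φ])`. -/
theorem stmt_3 {n : ℕ} (hn : 2 ≤ n) (G : SimpleGraph (Fin n)) (hG : G.Connected)
    (V : Fin n → Type) [∀ i, Fintype (V i)] (F : ∀ i, SimpleGraph (V i))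
    (hF : ∀ i, domNum (F i) = 1) :
    domNum G = domNum (GLP G F) :=
  stmt_3_general G V F hF
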